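/- arXiv:1212.2697 — 2 statements merged into one kernel-verified Lean document; each statement's English description precedes it below -/
import Mathlib

section
/- For all n ≥ 1, the number of alternating permutations of length 2n avoiding the pattern 1243 equals the number of alternating permutations of length 2n avoiding the pattern 1234. -/
/-!
Deleting the first two entries of an up-down permutation `W` of length `n + 2` and standardising
leaves an up-down permutation `u` of length `n`, and `W` is recovered from `u` and the standardised
values `v`, `w` of the deleted entries. `W` is an up-down permutation avoiding 1243 iff `u` is one,
`max (u 0) (f u) < v ≤ n + 1` and `e u < w ≤ v`, where `f u` and `e u` are the largest smallest
entries of a 21 and of a 132 in `u`; for 1234 the same holds with 12 and 123 in place of 21 and 132.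
So both sets fibre over their length-`n` versions, with fibres depending only on the pair of lower
bounds, and by induction there is a bijection preserving that pair. In the inductive step each
fibre is permuted so that the bounds of the 1234-extension match those of the 1243-extension:
`(v, w) ↦ (v - 1, w)`, except that `v` goes to `n + 1` when `w = v` or when `v` is one more than
the first bound.
-/

/-- `u` is a permutation of `{1,...,m}`, given as the word `u 0, u 1, ..., u (m-1)`. -/
def IsPermOn (m : ℕ) (u : Fin m → ℕ) : Prop :=
  Function.Injective u ∧ ∀ i, u i ∈ Finset.Icc 1 m

/-- up-down (alternating): u 0 < u 1 > u 2 < u 3 > ... -/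
def UpDown (m : ℕ) (u : Fin m → ℕ) : Prop :=
  ∀ i : ℕ, ∀ h : i + 1 < m,
    (i % 2 = 0 → u ⟨i, by omega⟩ < u ⟨i + 1, h⟩) ∧
    (i % 2 = 1 → u ⟨i + 1, h⟩ < u ⟨i, by omega⟩)

/-- down-up: u 0 > u 1 < u 2 > u 3 < ... -/
def DownUp (m : ℕ) (u : Fin m → ℕ) : Prop :=
  ∀ i : ℕ, ∀ h : i + 1 < m,
    (i % 2 = 0 → u ⟨i + 1, h⟩ < u ⟨i, by omega⟩) ∧
    (i % 2 = 1 → u ⟨i, by omega⟩ < u ⟨i + 1, h⟩)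

/-- `u` contains the pattern `σ`. -/
def Contains {m k : ℕ} (u : Fin m → ℕ) (σ : Fin k → ℕ) : Prop :=
  ∃ g : Fin k → Fin m, StrictMono g ∧ ∀ a b : Fin k, u (g a) < u (g b) ↔ σ a < σ b

def Avoids {m k : ℕ} (u : Fin m → ℕ) (σ : Fin k → ℕ) : Prop := ¬ Contains u σ

/-- The set `A_m(σ)` of σ-avoiding up-down alternating permutations of `{1,...,m}`. -/
def AvoidSet (m : ℕ) {k : ℕ} (σ : Fin k → ℕ) : Set (Fin m → ℕ) :=
  {u | IsPermOn m u ∧ UpDown m u ∧ Avoids u σ}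

def p1234 : Fin 4 → ℕ := ![1, 2, 3, 4]
def p1243 : Fin 4 → ℕ := ![1, 2, 4, 3]
def p2143 : Fin 4 → ℕ := ![2, 1, 4, 3]
def p4312 : Fin 4 → ℕ := ![4, 3, 1, 2]
def p3412 : Fin 4 → ℕ := ![3, 4, 1, 2]

/-- `f(u)`: max over 0 and the smaller entries of 21-patterns of `u`. -/
noncomputable def fval {m : ℕ} (u : Fin m → ℕ) : ℕ :=
  sSup ({0} ∪ {x | ∃ i j : Fin m, i < j ∧ u j < u i ∧ x = u j})

/-- `e(u)`: max over 0 and the smallest entries of 132-patterns of `u`. -/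
noncomputable def eval' {m : ℕ} (u : Fin m → ℕ) : ℕ :=
  sSup ({0} ∪ {x | ∃ i j k : Fin m, i < j ∧ j < k ∧ u i < u k ∧ u k < u j ∧ x = u i})

/-- `g(u)`: min over m+1 and the largest entries of 312-patterns of `u`. -/
noncomputable def gval {m : ℕ} (u : Fin m → ℕ) : ℕ :=
  sInf ({m + 1} ∪ {x | ∃ i j k : Fin m, i < j ∧ j < k ∧ u j < u k ∧ u k < u i ∧ x = u i})

/-- `h(u)`: min over m+1 and the larger entries of 12-patterns of `u`. -/
noncomputable def hval {m : ℕ} (u : Fin m → ℕ) : ℕ :=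
  sInf ({m + 1} ∪ {x | ∃ i j : Fin m, i < j ∧ u i < u j ∧ x = u j})

/-- the operation `v ↦ u`: prepend `v`, increasing every entry `≥ v` by 1. -/
def ins {m : ℕ} (v : ℕ) (u : Fin m → ℕ) : Fin (m + 1) → ℕ :=
  Fin.cases v (fun j => if u j < v then u j else u j + 1)

/-- standardization of a word with distinct entries. -/
def stWord {k : ℕ} (r : Fin k → ℕ) : Fin k → ℕ :=
  fun j => (Finset.univ.filter (fun i => r i ≤ r j)).card

section Insertion

variable {m : ℕ}

def shift (v x : ℕ) : ℕ := if x < v then x else x + 1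

def unshift (v x : ℕ) : ℕ := if x < v then x else x - 1

lemma shift_strictMono (v : ℕ) : StrictMono (shift v) := by
  intro a b h; unfold shift; split_ifs <;> omega

@[simp] lemma shift_lt_shift_iff {v a b : ℕ} : shift v a < shift v b ↔ a < b :=
  (shift_strictMono v).lt_iff_lt

@[simp] lemma lt_shift_iff {v a : ℕ} : v < shift v a ↔ v ≤ a := by
  unfold shift; split_ifs <;> omega

@[simp] lemma shift_lt_iff {v a : ℕ} : shift v a < v ↔ a < v := by
  unfold shift; split_ifs <;> omega

lemma shift_ne (v x : ℕ) : shift v x ≠ v := by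
  unfold shift; split_ifs <;> omega

lemma shift_zero {v : ℕ} (hv : 1 ≤ v) : shift v 0 = 0 := by
  unfold shift; split_ifs <;> omega

lemma shift_mem_Icc_iff {v x : ℕ} (hv : v ∈ Finset.Icc 1 (m + 1)) :
    shift v x ∈ Finset.Icc 1 (m + 1) ↔ x ∈ Finset.Icc 1 m := by
  simp only [Finset.mem_Icc, shift] at *; split_ifs <;> omega

@[simp] lemma ins_zero (v : ℕ) (u : Fin m → ℕ) : ins v u 0 = v := rfl

@[simp] lemma ins_succ (v : ℕ) (u : Fin m → ℕ) (j : Fin m) : ins v u j.succ = shift v (u j) := rfl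

@[simp] lemma ins_mk_succ (v : ℕ) (u : Fin m → ℕ) (i : ℕ) (h : i + 1 < m + 1) :
    ins v u ⟨i + 1, h⟩ = shift v (u ⟨i, by omega⟩) := rfl

@[simp] lemma ins_one (v : ℕ) (u : Fin (m + 1) → ℕ) : ins v u 1 = shift v (u 0) := rfl

lemma ins_eq_cons (v : ℕ) (u : Fin m → ℕ) : ins v u = Fin.cons v (shift v ∘ u) := rfl

def dropHead (W : Fin (m + 1) → ℕ) : Fin m → ℕ := fun j => unshift (W 0) (W j.succ)

lemma dropHead_ins (v : ℕ) (u : Fin m → ℕ) : dropHead (ins v u) = u := by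
  funext j
  simp only [dropHead, ins_zero, ins_succ, unshift, shift]
  split_ifs <;> omega

lemma ins_dropHead {W : Fin (m + 1) → ℕ} (hW : Function.Injective W) :
    ins (W 0) (dropHead W) = W := by
  funext i
  induction i using Fin.cases with
  | zero => rfl
  | succ j =>
    have := hW.ne (Fin.succ_ne_zero j)
    simp only [dropHead, ins_succ, unshift, shift]
    split_ifs <;> omega

lemma ins_injective_iff {v : ℕ} {u : Fin m → ℕ} :
    Function.Injective (ins v u) ↔ Function.Injective u := by
  rw [ins_eq_cons, Fin.cons_injective_iff, (shift_strictMono v).injective.of_comp_iff]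
  exact and_iff_right fun ⟨j, hj⟩ => shift_ne v (u j) hj

lemma isPermOn_ins_iff {v : ℕ} {u : Fin m → ℕ} :
    IsPermOn (m + 1) (ins v u) ↔ IsPermOn m u ∧ v ∈ Finset.Icc 1 (m + 1) := by
  simp only [IsPermOn, ins_injective_iff, Fin.forall_fin_succ, ins_zero, ins_succ]
  constructor
  · rintro ⟨hu, hv, hmem⟩
    exact ⟨⟨hu, fun j => (shift_mem_Icc_iff hv).1 (hmem j)⟩, hv⟩
  · rintro ⟨⟨hu, hmem⟩, hv⟩
    exact ⟨hu, hv, fun j => (shift_mem_Icc_iff hv).2 (hmem j)⟩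

lemma upDown_ins_iff {v : ℕ} {u : Fin (m + 1) → ℕ} :
    UpDown (m + 1 + 1) (ins v u) ↔ v ≤ u 0 ∧ DownUp (m + 1) u := by
  constructor
  · intro h
    refine ⟨by simpa using (h 0 (by omega)).1 rfl, fun i hi => ?_⟩
    have hi' := h (i + 1) (by omega)
    simp only [ins_mk_succ, shift_lt_shift_iff, Nat.succ_mod_two_eq_zero_iff,
      Nat.succ_mod_two_eq_one_iff] at hi'
    exact hi'.symm
  · rintro ⟨h0, h⟩ (_ | i) hi
    · simpa using h0
    · simpa only [ins_mk_succ, shift_lt_shift_iff, Nat.succ_mod_two_eq_zero_iff,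
        Nat.succ_mod_two_eq_one_iff, and_comm] using h i (by omega)

lemma downUp_ins_iff {v : ℕ} {u : Fin (m + 1) → ℕ} :
    DownUp (m + 1 + 1) (ins v u) ↔ u 0 < v ∧ UpDown (m + 1) u := by
  constructor
  · intro h
    refine ⟨by simpa using (h 0 (by omega)).1 rfl, fun i hi => ?_⟩
    have hi' := h (i + 1) (by omega)
    simp only [ins_mk_succ, shift_lt_shift_iff, Nat.succ_mod_two_eq_zero_iff,
      Nat.succ_mod_two_eq_one_iff] at hi'
    exact hi'.symm
  · rintro ⟨h0, h⟩ (_ | i) hi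
    · simpa using h0
    · simpa only [ins_mk_succ, shift_lt_shift_iff, Nat.succ_mod_two_eq_zero_iff,
        Nat.succ_mod_two_eq_one_iff, and_comm] using h i (by omega)

end Insertion

def OrderInvariant (r : ℕ → ℕ → Prop) : Prop :=
  ∀ f : ℕ → ℕ, StrictMono f → ∀ a b, r (f a) (f b) ↔ r a b

lemma orderInvariant_lt : OrderInvariant (· < ·) := fun _ hf _ _ => hf.lt_iff_lt

lemma orderInvariant_gt : OrderInvariant (· > ·) := fun _ hf _ _ => hf.lt_iff_lt

lemma OrderInvariant.shift_iff {r : ℕ → ℕ → Prop} (hr : OrderInvariant r) (v a b : ℕ) :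
    r (shift v a) (shift v b) ↔ r a b :=
  hr _ (shift_strictMono v) a b

section Statistics

variable (r : ℕ → ℕ → Prop) [DecidableRel r] {m : ℕ}

/- For `r = (· > ·)`, an `r`-pair is a 21, `IsOcc3 r` is a 132 and `Contains4 r` is containment
of 1243; for `r = (· < ·)` they are 12, 123 and 1234. `maxBottom2` and `maxBottom3` are the largest
smallest entries of occurrences (0 if there is none), so for `r = (· > ·)` they are `fval` and
`eval'`. -/
def maxBottom2 (u : Fin m → ℕ) : ℕ :=
  (Finset.univ.filter fun p : Fin m × Fin m => p.1 < p.2 ∧ r (u p.1) (u p.2)).sup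
    fun p => min (u p.1) (u p.2)

def IsOcc3 (u : Fin m → ℕ) (i j k : Fin m) : Prop :=
  i < j ∧ j < k ∧ u i < u j ∧ u i < u k ∧ r (u j) (u k)

instance (u : Fin m → ℕ) (i j k : Fin m) : Decidable (IsOcc3 r u i j k) := by
  unfold IsOcc3; infer_instance

def maxBottom3 (u : Fin m → ℕ) : ℕ :=
  (Finset.univ.filter fun t : Fin m × Fin m × Fin m => IsOcc3 r u t.1 t.2.1 t.2.2).sup
    fun t => u t.1

def Contains4 (u : Fin m → ℕ) : Prop :=
  ∃ h i j k, h < i ∧ u h < u i ∧ IsOcc3 r u i j k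

variable {r}

lemma maxBottom2_le_iff {u : Fin m → ℕ} {c : ℕ} :
    maxBottom2 r u ≤ c ↔ ∀ i j, i < j → r (u i) (u j) → min (u i) (u j) ≤ c := by
  simp [maxBottom2, Finset.sup_le_iff]

lemma lt_maxBottom2_iff {u : Fin m → ℕ} {c : ℕ} :
    c < maxBottom2 r u ↔ ∃ i j, i < j ∧ r (u i) (u j) ∧ c < u i ∧ c < u j := by
  simp [maxBottom2, Finset.lt_sup_iff, and_assoc]

lemma le_maxBottom2_iff {v : ℕ} (hv : 1 ≤ v) {u : Fin m → ℕ} :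
    v ≤ maxBottom2 r u ↔ ∃ i j, i < j ∧ r (u i) (u j) ∧ v ≤ u i ∧ v ≤ u j := by
  rw [show v = v - 1 + 1 by omega, Nat.add_one_le_iff, lt_maxBottom2_iff]
  simp only [Nat.sub_add_cancel hv, Nat.sub_lt_iff_lt_add hv, Nat.lt_add_one_iff]

lemma shift_maxBottom2_le_iff {v : ℕ} (hv : 1 ≤ v) {u : Fin m → ℕ} {c : ℕ} :
    shift v (maxBottom2 r u) ≤ c ↔
      ∀ i j, i < j → r (u i) (u j) → min (shift v (u i)) (shift v (u j)) ≤ c := by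
  rw [maxBottom2, Finset.apply_sup_eq_sup_comp_of_linearOrder _ (shift_strictMono v).monotone
    (shift_zero hv)]
  simp [Finset.sup_le_iff, (shift_strictMono v).monotone.map_min]

lemma maxBottom3_le_iff {u : Fin m → ℕ} {c : ℕ} :
    maxBottom3 r u ≤ c ↔ ∀ i j k, IsOcc3 r u i j k → u i ≤ c := by
  simp [maxBottom3, Finset.sup_le_iff]

lemma lt_maxBottom3_iff {u : Fin m → ℕ} {c : ℕ} :
    c < maxBottom3 r u ↔ ∃ i j k, IsOcc3 r u i j k ∧ c < u i := by
  simp [maxBottom3, Finset.lt_sup_iff]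

lemma le_maxBottom3_iff {v : ℕ} (hv : 1 ≤ v) {u : Fin m → ℕ} :
    v ≤ maxBottom3 r u ↔ ∃ i j k, IsOcc3 r u i j k ∧ v ≤ u i := by
  rw [show v = v - 1 + 1 by omega, Nat.add_one_le_iff, lt_maxBottom3_iff]
  simp only [Nat.sub_add_cancel hv, Nat.sub_lt_iff_lt_add hv, Nat.lt_add_one_iff]

lemma shift_maxBottom3_le_iff {v : ℕ} (hv : 1 ≤ v) {u : Fin m → ℕ} {c : ℕ} :
    shift v (maxBottom3 r u) ≤ c ↔ ∀ i j k, IsOcc3 r u i j k → shift v (u i) ≤ c := by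
  rw [maxBottom3, Finset.apply_sup_eq_sup_comp_of_linearOrder _ (shift_strictMono v).monotone
    (shift_zero hv)]
  simp [Finset.sup_le_iff]

lemma maxBottom2_ins_le_iff (hr : OrderInvariant r) {v : ℕ} (hv : 1 ≤ v) {u : Fin m → ℕ} {c : ℕ} :
    maxBottom2 r (ins v u) ≤ c ↔
      (∀ j, r v (shift v (u j)) → min v (shift v (u j)) ≤ c) ∧ shift v (maxBottom2 r u) ≤ c := by
  simp only [maxBottom2_le_iff, shift_maxBottom2_le_iff hv, Fin.forall_fin_succ, ins_zero, ins_succ,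
    Fin.succ_lt_succ_iff, Fin.not_lt_zero, Fin.succ_pos, IsEmpty.forall_iff, true_and,
    hr.shift_iff, forall_const]

lemma maxBottom3_ins (hr : OrderInvariant r) {v : ℕ} (hv : 1 ≤ v) (u : Fin m → ℕ) :
    maxBottom3 r (ins v u) =
      max (shift v (maxBottom3 r u)) (if v ≤ maxBottom2 r u then v else 0) := by
  refine eq_of_forall_ge_iff fun c => ?_
  simp only [maxBottom3_le_iff, IsOcc3, Fin.forall_fin_succ, ins_zero, ins_succ,
    Fin.succ_lt_succ_iff, Fin.not_lt_zero, Fin.succ_pos, false_and, and_false, IsEmpty.forall_iff,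
    implies_true, true_and, lt_shift_iff, shift_lt_shift_iff, hr.shift_iff, max_le_iff,
    shift_maxBottom3_le_iff hv]
  rw [and_comm]
  refine and_congr_right fun _ => ?_
  by_cases h : v ≤ maxBottom2 r u
  · obtain ⟨i, j, hij, hrij, hi, hj⟩ := (le_maxBottom2_iff hv).1 h
    rw [if_pos h]
    exact ⟨fun H => H i j ⟨hij, hi, hj, hrij⟩, fun hc _ _ _ => hc⟩
  · rw [if_neg h]
    exact iff_of_true (fun i j ⟨hij, hi, hj, hrij⟩ =>
      absurd ((le_maxBottom2_iff hv).2 ⟨i, j, hij, hrij, hi, hj⟩) h) (Nat.zero_le c)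

lemma contains4_ins_iff (hr : OrderInvariant r) {v : ℕ} (hv : 1 ≤ v) {u : Fin m → ℕ} :
    Contains4 r (ins v u) ↔ Contains4 r u ∨ v ≤ maxBottom3 r u := by
  simp only [Contains4, le_maxBottom3_iff hv, IsOcc3, Fin.exists_fin_succ, ins_zero, ins_succ,
    Fin.succ_lt_succ_iff, Fin.not_lt_zero, Fin.succ_pos, false_and, and_false, true_and,
    lt_shift_iff, shift_lt_shift_iff, hr.shift_iff, exists_false, false_or]
  exact or_comm.trans (or_congr_right (exists₃_congr fun i j k => and_comm))

end Statistics

section Permutations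

variable {m : ℕ}

lemma IsPermOn.exists_eq {u : Fin m → ℕ} (hu : IsPermOn m u) {t : ℕ} (ht : t ∈ Finset.Icc 1 m) :
    ∃ i, u i = t := by
  have himage : Finset.univ.image u = Finset.Icc 1 m :=
    Finset.eq_of_subset_of_card_le (Finset.image_subset_iff.2 fun i _ => hu.2 i)
      (by simp [Finset.card_image_of_injective _ hu.1])
  rw [← himage] at ht
  simpa using ht

lemma maxBottom2_gt_ins {u : Fin m → ℕ} (hu : IsPermOn m u) {v : ℕ}
    (hv : v ∈ Finset.Icc 1 (m + 1)) :
    maxBottom2 (· > ·) (ins v u) = max (shift v (maxBottom2 (· > ·) u)) (v - 1) := by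
  rw [Finset.mem_Icc] at hv
  refine eq_of_forall_ge_iff fun c => ?_
  rw [maxBottom2_ins_le_iff orderInvariant_gt hv.1, max_le_iff, and_comm (a := shift v _ ≤ c)]
  refine and_congr_left' ⟨fun H => ?_, fun hc j hj => ?_⟩
  · obtain hv1 | hv1 := eq_or_lt_of_le hv.1
    · omega
    obtain ⟨j, hj⟩ := hu.exists_eq (t := v - 1) (Finset.mem_Icc.2 ⟨by omega, by omega⟩)
    have := H j
    simp only [shift, hj] at this
    split_ifs at this <;> omega
  · simp only [shift] at hj ⊢
    split_ifs at hj ⊢ <;> omega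

lemma maxBottom2_lt_ins {u : Fin m → ℕ} (hu : IsPermOn m u) {v : ℕ}
    (hv : v ∈ Finset.Icc 1 (m + 1)) :
    maxBottom2 (· < ·) (ins v u) =
      max (shift v (maxBottom2 (· < ·) u)) (if v ≤ m then v else 0) := by
  rw [Finset.mem_Icc] at hv
  refine eq_of_forall_ge_iff fun c => ?_
  rw [maxBottom2_ins_le_iff orderInvariant_lt hv.1, max_le_iff, and_comm (a := shift v _ ≤ c)]
  refine and_congr_left' ⟨fun H => ?_, fun hc j hj => ?_⟩
  · split_ifs with hvm
    · obtain ⟨j, hj⟩ := hu.exists_eq (Finset.mem_Icc.2 ⟨hv.1, hvm⟩)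
      have := H j
      simp only [shift, hj] at this
      split_ifs at this <;> omega
    · exact Nat.zero_le c
  · have hvj : v ≤ u j := lt_shift_iff.1 hj
    rw [if_pos (hvj.trans (Finset.mem_Icc.1 (hu.2 j)).2)] at hc
    exact (min_le_left _ _).trans hc

lemma UpDown.head_le_maxBottom2_lt {u : Fin (m + 1 + 1) → ℕ} (h : UpDown (m + 1 + 1) u) :
    u 0 ≤ maxBottom2 (· < ·) u := by
  have h01 : u 0 < u 1 := (h 0 (by omega)).1 rfl
  simpa [h01.le] using maxBottom2_le_iff.1 le_rfl 0 1 Fin.zero_lt_one h01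

end Permutations

lemma strictMono_vecCons_four {m : ℕ} {a b c d : Fin m} (hab : a < b) (hbc : b < c) (hcd : c < d) :
    StrictMono ![a, b, c, d] :=
  Fin.strictMono_iff_lt_succ.2 (by simp [Fin.forall_fin_succ, hab, hbc, hcd])

lemma contains_p1243_iff {m : ℕ} {u : Fin m → ℕ} : Contains u p1243 ↔ Contains4 (· > ·) u := by
  constructor
  · rintro ⟨g, hg, h⟩
    exact ⟨g 0, g 1, g 2, g 3, hg (by decide), (h 0 1).2 (by decide), hg (by decide),
      hg (by decide), (h 1 2).2 (by decide), (h 1 3).2 (by decide), (h 3 2).2 (by decide)⟩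
  · rintro ⟨a, b, c, d, hab, h1, hbc, hcd, h2, h3, h4⟩
    refine ⟨![a, b, c, d], strictMono_vecCons_four hab hbc hcd, fun x y => ?_⟩
    fin_cases x <;> fin_cases y <;> simp [p1243] <;> omega

lemma contains_p1234_iff {m : ℕ} {u : Fin m → ℕ} : Contains u p1234 ↔ Contains4 (· < ·) u := by
  constructor
  · rintro ⟨g, hg, h⟩
    exact ⟨g 0, g 1, g 2, g 3, hg (by decide), (h 0 1).2 (by decide), hg (by decide),
      hg (by decide), (h 1 2).2 (by decide), (h 1 3).2 (by decide), (h 2 3).2 (by decide)⟩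
  · rintro ⟨a, b, c, d, hab, h1, hbc, hcd, h2, h3, h4⟩
    refine ⟨![a, b, c, d], strictMono_vecCons_four hab hbc hcd, fun x y => ?_⟩
    fin_cases x <;> fin_cases y <;> simp [p1234] <;> omega

lemma avoids_of_lt {m k : ℕ} (u : Fin m → ℕ) (σ : Fin k → ℕ) (h : m < k) : Avoids u σ :=
  fun ⟨g, hg, _⟩ => (Fin.le_of_injective g hg.injective).not_gt h

section TwoStep

variable {m : ℕ}

def insTwo (p : ℕ × ℕ) (u : Fin m → ℕ) : Fin (m + 1 + 1) → ℕ := ins p.2 (ins p.1 u)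

def insBounds (r : ℕ → ℕ → Prop) [DecidableRel r] (u : Fin (m + 1) → ℕ) : ℕ × ℕ :=
  (max (u 0) (maxBottom2 r u), maxBottom3 r u)

def Fiber (n : ℕ) (s : ℕ × ℕ) : Set (ℕ × ℕ) :=
  {p | s.1 < p.1 ∧ p.1 ≤ n + 1 ∧ s.2 < p.2 ∧ p.2 ≤ p.1}

lemma insTwo_dropHead {W : Fin (m + 1 + 1) → ℕ} (hW : Function.Injective W) :
    insTwo (dropHead W 0, W 0) (dropHead (dropHead W)) = W := by
  have h := ins_dropHead hW
  rw [insTwo, ins_dropHead (ins_injective_iff.1 (h.symm ▸ hW)), h]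

lemma dropHead_dropHead_insTwo (p : ℕ × ℕ) (u : Fin m → ℕ) :
    dropHead (dropHead (insTwo p u)) = u := by
  rw [insTwo, dropHead_ins, dropHead_ins]

lemma heads_insTwo (p : ℕ × ℕ) (u : Fin m → ℕ) :
    (dropHead (insTwo p u) 0, insTwo p u 0) = p := by
  rw [insTwo, dropHead_ins]
  rfl

variable {r : ℕ → ℕ → Prop} [DecidableRel r]

lemma insTwo_mem_avoidSet_iff (hr : OrderInvariant r) {k : ℕ} {σ : Fin k → ℕ}
    (hσ : ∀ {n} {x : Fin n → ℕ}, Contains x σ ↔ Contains4 r x) {u : Fin (m + 1) → ℕ}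
    {p : ℕ × ℕ} :
    insTwo p u ∈ AvoidSet (m + 1 + 1 + 1) σ ↔
      u ∈ AvoidSet (m + 1) σ ∧ p ∈ Fiber (m + 1) (insBounds r u) := by
  obtain ⟨v, w⟩ := p
  simp only [AvoidSet, Set.mem_ofPred_eq, Avoids, hσ, insTwo, Fiber, insBounds, isPermOn_ins_iff,
    upDown_ins_iff, downUp_ins_iff, ins_zero, Finset.mem_Icc]
  constructor
  · rintro ⟨⟨⟨hu, hv1, hv2⟩, hw1, hw2⟩, ⟨hwv, hu0, hud⟩, hav⟩
    rw [contains4_ins_iff hr hw1, contains4_ins_iff hr hv1, maxBottom3_ins hr hv1] at hav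
    simp only [not_or, not_le, max_lt_iff, shift] at hav ⊢
    refine ⟨⟨hu, hud, hav.1.1⟩, ?_⟩
    split_ifs at hav <;> omega
  · rintro ⟨⟨hu, hud, hav⟩, h1, h2, h3, h4⟩
    have hv1 : 1 ≤ v := by omega
    have hw1 : 1 ≤ w := by omega
    rw [contains4_ins_iff hr hw1, contains4_ins_iff hr hv1, maxBottom3_ins hr hv1]
    simp only [not_or, not_le, max_lt_iff, shift] at h1 ⊢
    refine ⟨⟨⟨hu, hv1, h2⟩, hw1, by omega⟩, ⟨h4, h1.1, hud⟩, ⟨hav, by omega⟩, ?_⟩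
    split_ifs <;> omega

lemma mem_avoidSet_split (hr : OrderInvariant r) {k : ℕ} {σ : Fin k → ℕ}
    (hσ : ∀ {n} {x : Fin n → ℕ}, Contains x σ ↔ Contains4 r x) {W : Fin (m + 1 + 1 + 1) → ℕ}
    (hW : W ∈ AvoidSet (m + 1 + 1 + 1) σ) :
    dropHead (dropHead W) ∈ AvoidSet (m + 1) σ ∧
      (dropHead W 0, W 0) ∈ Fiber (m + 1) (insBounds r (dropHead (dropHead W))) := by
  rw [← insTwo_mem_avoidSet_iff hr hσ, insTwo_dropHead hW.1.1]
  exact hW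

def avoidSetEquivSigma (hr : OrderInvariant r) {k : ℕ} {σ : Fin k → ℕ}
    (hσ : ∀ {n} {x : Fin n → ℕ}, Contains x σ ↔ Contains4 r x) (m : ℕ) :
    AvoidSet (m + 1 + 1 + 1) σ ≃ Σ u : AvoidSet (m + 1) σ, Fiber (m + 1) (insBounds r u.1) where
  toFun W := ⟨⟨_, (mem_avoidSet_split hr hσ W.2).1⟩, ⟨_, (mem_avoidSet_split hr hσ W.2).2⟩⟩
  invFun x := ⟨insTwo x.2 x.1, (insTwo_mem_avoidSet_iff hr hσ).2 ⟨x.1.2, x.2.2⟩⟩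
  left_inv W := Subtype.ext (insTwo_dropHead W.2.1.1)
  right_inv _ := Sigma.subtype_ext (Subtype.ext (dropHead_dropHead_insTwo _ _)) (heads_insTwo _ _)

def nextBoundsGt (s p : ℕ × ℕ) : ℕ × ℕ := (p.1, if p.2 < p.1 then p.2 else s.2)

def nextBoundsLt (n : ℕ) (s p : ℕ × ℕ) : ℕ × ℕ :=
  if p.1 ≤ n then (p.1 + 1, p.2) else if p.2 ≤ s.1 then (s.1 + 1, p.2) else (p.2, s.2)

lemma insBounds_gt_insTwo {u : Fin (m + 1) → ℕ} (hu : IsPermOn (m + 1) u) {p : ℕ × ℕ}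
    (hp : p ∈ Fiber (m + 1) (insBounds (· > ·) u)) :
    insBounds (· > ·) (insTwo p u) = nextBoundsGt (insBounds (· > ·) u) p := by
  obtain ⟨v, w⟩ := p
  simp only [Fiber, insBounds, Set.mem_ofPred_eq, max_lt_iff] at hp
  have hv : v ∈ Finset.Icc 1 (m + 1 + 1) := Finset.mem_Icc.2 ⟨by omega, by omega⟩
  have hw : w ∈ Finset.Icc 1 (m + 1 + 1 + 1) := Finset.mem_Icc.2 ⟨by omega, by omega⟩
  simp only [insBounds, insTwo, nextBoundsGt, ins_zero,
    maxBottom2_gt_ins (isPermOn_ins_iff.2 ⟨hu, hv⟩) hw, maxBottom2_gt_ins hu hv,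
    maxBottom3_ins orderInvariant_gt (Finset.mem_Icc.1 hw).1,
    maxBottom3_ins orderInvariant_gt (Finset.mem_Icc.1 hv).1, Prod.mk.injEq]
  unfold shift
  constructor <;> split_ifs <;> omega

lemma insBounds_lt_insTwo {u : Fin (m + 1) → ℕ} (hu : IsPermOn (m + 1) u)
    (hu0 : u 0 ≤ maxBottom2 (· < ·) u) {p : ℕ × ℕ}
    (hp : p ∈ Fiber (m + 1) (insBounds (· < ·) u)) :
    insBounds (· < ·) (insTwo p u) = nextBoundsLt (m + 1) (insBounds (· < ·) u) p := by
  obtain ⟨v, w⟩ := p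
  simp only [Fiber, insBounds, Set.mem_ofPred_eq, max_lt_iff] at hp
  have hv : v ∈ Finset.Icc 1 (m + 1 + 1) := Finset.mem_Icc.2 ⟨by omega, by omega⟩
  have hw : w ∈ Finset.Icc 1 (m + 1 + 1 + 1) := Finset.mem_Icc.2 ⟨by omega, by omega⟩
  simp only [insBounds, insTwo, nextBoundsLt, ins_zero,
    maxBottom2_lt_ins (isPermOn_ins_iff.2 ⟨hu, hv⟩) hw, maxBottom2_lt_ins hu hv,
    maxBottom3_ins orderInvariant_lt (Finset.mem_Icc.1 hw).1,
    maxBottom3_ins orderInvariant_lt (Finset.mem_Icc.1 hv).1, max_eq_right hu0]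
  unfold shift
  split_ifs <;> simp only [Prod.mk.injEq] <;> omega

end TwoStep

def fiberPerm (n : ℕ) (s : ℕ × ℕ) : Equiv.Perm (Fiber n s) where
  toFun p := ⟨(if p.1.2 = p.1.1 ∨ p.1.1 = s.1 + 1 then n + 1 else p.1.1 - 1, p.1.2), by
    obtain ⟨⟨v, w⟩, hp⟩ := p
    simp only [Fiber, Set.mem_ofPred_eq] at hp ⊢
    split_ifs <;> omega⟩
  invFun p := ⟨(if p.1.1 = n + 1 then (if s.1 < p.1.2 then p.1.2 else s.1 + 1) else p.1.1 + 1,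
      p.1.2), by
    obtain ⟨⟨v, w⟩, hp⟩ := p
    simp only [Fiber, Set.mem_ofPred_eq] at hp ⊢
    split_ifs <;> omega⟩
  left_inv p := by
    obtain ⟨⟨v, w⟩, hp⟩ := p
    simp only [Fiber, Set.mem_ofPred_eq] at hp
    ext <;> dsimp only; split_ifs <;> omega
  right_inv p := by
    obtain ⟨⟨v, w⟩, hp⟩ := p
    simp only [Fiber, Set.mem_ofPred_eq] at hp
    ext <;> dsimp only; split_ifs <;> omega

lemma nextBoundsLt_fiberPerm (n : ℕ) (s : ℕ × ℕ) (p : Fiber n s) :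
    nextBoundsLt n s (fiberPerm n s p) = nextBoundsGt s p := by
  obtain ⟨⟨v, w⟩, hp⟩ := p
  simp only [Fiber, Set.mem_ofPred_eq] at hp
  simp only [fiberPerm, Equiv.coe_fn_mk, nextBoundsLt, nextBoundsGt]
  split_ifs <;> ext <;> dsimp only <;> omega

lemma insBounds_fin_two (r : ℕ → ℕ → Prop) [DecidableRel r] (u : Fin 2 → ℕ) :
    insBounds r u = (u 0, 0) := by
  have h2 : maxBottom2 r u ≤ u 0 :=
    maxBottom2_le_iff.2 fun i j hij _ => by
      obtain rfl : i = 0 := by omega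
      exact min_le_left _ _
  have h3 : maxBottom3 r u = 0 :=
    Nat.le_zero.1 (maxBottom3_le_iff.2 fun i j k ⟨hij, hjk, _⟩ => by omega)
  rw [insBounds, max_eq_left h2, h3]

theorem exists_equiv_insBounds_step {m : ℕ}
    (e : AvoidSet (m + 1 + 1) p1243 ≃ AvoidSet (m + 1 + 1) p1234)
    (he : ∀ u, insBounds (· < ·) (e u).1 = insBounds (· > ·) u.1) :
    ∃ e' : AvoidSet (m + 1 + 1 + 1 + 1) p1243 ≃ AvoidSet (m + 1 + 1 + 1 + 1) p1234,
      ∀ W, insBounds (· < ·) (e' W).1 = insBounds (· > ·) W.1 := by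
  let split₁ := avoidSetEquivSigma orderInvariant_gt contains_p1243_iff (m + 1)
  let split₂ := avoidSetEquivSigma orderInvariant_lt contains_p1234_iff (m + 1)
  let onFibers :
      (Σ u : AvoidSet (m + 1 + 1) p1243, Fiber (m + 1 + 1) (insBounds (· > ·) u.1)) ≃
        Σ u : AvoidSet (m + 1 + 1) p1234, Fiber (m + 1 + 1) (insBounds (· < ·) u.1) :=
    Equiv.sigmaCongr e fun u =>
      (fiberPerm _ _).trans (Equiv.setCongr (congrArg (Fiber (m + 1 + 1)) (he u).symm))
  refine ⟨split₁.trans (onFibers.trans split₂.symm), fun W => ?_⟩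
  obtain ⟨⟨u, p⟩, rfl⟩ := split₁.symm.surjective W
  have hv := (e u).2
  have hp : (fiberPerm _ _ p).1 ∈ Fiber (m + 1 + 1) (insBounds (· < ·) (e u).1) := by
    rw [he]; exact (fiberPerm _ _ p).2
  simp only [Equiv.trans_apply, Equiv.apply_symm_apply]
  change insBounds (· < ·) (insTwo (fiberPerm _ _ p).1 (e u).1) = insBounds (· > ·) (insTwo p.1 u.1)
  rw [insBounds_lt_insTwo hv.1 hv.2.1.head_le_maxBottom2_lt hp, he, nextBoundsLt_fiberPerm,
    insBounds_gt_insTwo u.2.1 p.2]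

theorem exists_equiv_insBounds (k : ℕ) :
    ∃ e : AvoidSet (2 * k + 1 + 1) p1243 ≃ AvoidSet (2 * k + 1 + 1) p1234,
      ∀ u, insBounds (· < ·) (e u).1 = insBounds (· > ·) u.1 := by
  induction k with
  | zero =>
    have h : AvoidSet 2 p1243 = AvoidSet 2 p1234 := by
      ext u
      simp [AvoidSet, avoids_of_lt]
    exact ⟨Equiv.setCongr h, fun u => by simp [insBounds_fin_two]⟩
  | succ k ih =>
    obtain ⟨e, he⟩ := ih
    exact exists_equiv_insBounds_step e he

theorem stmt2 (n : ℕ) (hn : 1 ≤ n) :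
    Nat.card (AvoidSet (2 * n) p1243) = Nat.card (AvoidSet (2 * n) p1234) := by
  obtain ⟨k, rfl⟩ : ∃ k, n = k + 1 := ⟨n - 1, by omega⟩
  obtain ⟨e, -⟩ := exists_equiv_insBounds k
  exact Nat.card_congr e
end

section
/- An alternating permutation u = u_1 u_2 ··· u_{2n+1} ∈ A_{2n+1}(1243) satisfies 2n+2 - max{u_1+1, f(u)+1} = 1 if and only if u_2 = 2n+1. -/
/-!
If `u₂ = 2n+1`, the entry `2n` is either `u₁` or comes after `u₂` and is then the smaller entry
of a 21-pattern, so `max (u₁, f(u)) = 2n`. Conversely, `max (u₁, f(u)) = 2n` means `u₁ = 2n`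
(forcing `u₂ = 2n+1`) or that `2n+1` precedes `2n`; if `2n+1` were then not `u₂`, the word
`u₁ u₂ (2n+1) (2n)` would be an occurrence of 1243.
-/

theorem Contains.p1243_of_lt {m : ℕ} {u : Fin m → ℕ} {a b c d : Fin m}
    (hab : a < b) (hbc : b < c) (hcd : c < d)
    (hub : u a < u b) (hbd : u b < u d) (hdc : u d < u c) : Contains u p1243 := by
  refine ⟨![a, b, c, d], Fin.strictMono_iff_lt_succ.2 fun i => ?_, fun x y => ?_⟩
  · fin_cases i <;> simpa
  · fin_cases x <;> fin_cases y <;> simp [p1243] <;> omega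

section fval

variable {m : ℕ} {u : Fin m → ℕ}

theorem bddAbove_fval_set (u : Fin m → ℕ) :
    BddAbove ({0} ∪ {x | ∃ i j : Fin m, i < j ∧ u j < u i ∧ x = u j}) :=
  ((Set.finite_singleton 0).union <| (Set.finite_range u).subset <| by
    rintro _ ⟨-, j, -, -, rfl⟩
    exact ⟨j, rfl⟩).bddAbove

theorem fval_le {B : ℕ} (h : ∀ i j, i < j → u j < u i → u j ≤ B) : fval u ≤ B := by
  refine csSup_le ⟨0, Or.inl rfl⟩ ?_
  rintro x (rfl | ⟨i, j, hij, hji, rfl⟩)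
  exacts [Nat.zero_le B, h i j hij hji]

theorem le_fval {i j : Fin m} (hij : i < j) (hji : u j < u i) : u j ≤ fval u :=
  le_csSup (bddAbove_fval_set u) (Or.inr ⟨i, j, hij, hji, rfl⟩)

theorem fval_eq_zero_or_exists (u : Fin m → ℕ) :
    fval u = 0 ∨ ∃ i j, i < j ∧ u j < u i ∧ fval u = u j :=
  Nat.sSup_mem ⟨0, Or.inl rfl⟩ (bddAbove_fval_set u)

end fval

namespace IsPermOn

variable {m : ℕ} {u : Fin m → ℕ}

theorem le (hu : IsPermOn m u) (i : Fin m) : u i ≤ m :=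
  (Finset.mem_Icc.1 (hu.2 i)).2

theorem exists_eq_s7 (hu : IsPermOn m u) {v : ℕ} (hv : 1 ≤ v) (hvm : v ≤ m) : ∃ i, u i = v := by
  have himage : Finset.univ.image u = Finset.Icc 1 m :=
    Finset.eq_of_subset_of_card_le (Finset.image_subset_iff.2 fun i _ => hu.2 i)
      (by simp [Finset.card_image_of_injective _ hu.1])
  obtain ⟨i, -, hi⟩ := Finset.mem_image.1 (himage ▸ Finset.mem_Icc.2 ⟨hv, hvm⟩)
  exact ⟨i, hi⟩

theorem fval_le_pred (hu : IsPermOn m u) : fval u ≤ m - 1 :=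
  fval_le fun i _ _ hji => by have := hu.le i; omega

theorem fval_eq_pred_iff (hu : IsPermOn m u) (hm : 2 ≤ m) :
    fval u = m - 1 ↔ ∃ i j, i < j ∧ u i = m ∧ u j = m - 1 := by
  constructor
  · intro hf
    rcases fval_eq_zero_or_exists u with h0 | ⟨i, j, hij, hji, hfj⟩
    · omega
    · exact ⟨i, j, hij, by have := hu.le i; omega, by omega⟩
  · rintro ⟨i, j, hij, hi, hj⟩
    exact le_antisymm hu.fval_le_pred (hj ▸ le_fval hij (by omega))

theorem apply_one_eq_iff (hu : IsPermOn m u) (hav : Avoids u p1243) (hm : 2 ≤ m)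
    (h01 : u ⟨0, by omega⟩ < u ⟨1, by omega⟩) :
    u ⟨1, by omega⟩ = m ↔ u ⟨0, by omega⟩ = m - 1 ∨ fval u = m - 1 := by
  have hu1 := hu.le ⟨1, by omega⟩
  constructor
  · intro h1
    obtain ⟨j, hj⟩ := hu.exists_eq_s7 (v := m - 1) (by omega) (by omega)
    obtain ⟨_ | _ | k, hk⟩ := j
    · exact Or.inl hj
    · exact absurd (h1.symm.trans hj) (by omega)
    · exact Or.inr <| (hu.fval_eq_pred_iff hm).2
        ⟨⟨1, by omega⟩, ⟨k + 2, hk⟩, Fin.mk_lt_mk.2 (by omega), h1, hj⟩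
  · rintro (h0 | hf)
    · omega
    obtain ⟨i, j, hij, hi, hj⟩ := (hu.fval_eq_pred_iff hm).1 hf
    by_contra h1
    obtain ⟨_ | _ | k, hk⟩ := i
    · omega
    · exact h1 hi
    have hu1j : u ⟨1, by omega⟩ ≠ m - 1 := fun h => by
      rw [← hu.1 (h.trans hj.symm), Fin.mk_lt_mk] at hij
      omega
    exact hav <| Contains.p1243_of_lt (a := ⟨0, by omega⟩) (b := ⟨1, by omega⟩)
      (Fin.mk_lt_mk.2 Nat.one_pos) (Fin.mk_lt_mk.2 (by omega)) hij h01 (by omega) (by omega)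

end IsPermOn

theorem stmt7 (n : ℕ) (hn : 1 ≤ n) (u : Fin (2 * n + 1) → ℕ) (hu : u ∈ AvoidSet (2 * n + 1) p1243) :
    2 * n + 2 - max (u ⟨0, by omega⟩ + 1) (fval u + 1) = 1 ↔ u ⟨1, by omega⟩ = 2 * n + 1 := by
  obtain ⟨hperm, hud, hav⟩ := hu
  have h01 : u ⟨0, by omega⟩ < u ⟨1, by omega⟩ := (hud 0 (by omega)).1 rfl
  have hf := hperm.fval_le_pred
  have hu1 := hperm.le ⟨1, by omega⟩
  rw [hperm.apply_one_eq_iff hav (by omega) h01]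
  omega
end
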